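/- Let G₁ = (V₁, E₁) and G₂ = (V₂, E₂) be finite graphs, f : V₂ → V₁ a function, and θ : ℓ∞(V₁) → ℓ∞(V₂) the induced *-homomorphism. Equip each ℓ∞(V_k) with the inner product making {χ_v} orthonormal, and let θ† : ℓ∞(V₂) → ℓ∞(V₁) be the adjoint, so θ†(χ_v) = χ_{f(v)}. Then f is a graph homomorphism from G₂ to G₁ if and only if (θ† ⊗ θ†)(Ann(S₂^⊥)) ⊆ Ann(S₁^⊥), where S_k^⊥ := span{|v⟩⟨w| : (v,w) ∉ E_k}. -/

import Mathlib

/-!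
Writing `z_{vw}` for the coefficient of `χ_v ⊗ χ_w` in `z`, the operator `Φ_z` multiplies the
matrix unit `|v⟩⟨w|` by `z_{vw}`, so `z ∈ Ann(S^⊥)` iff `z_{vw} = 0` for every non-edge `(v, w)`.
The coefficients of `(θ† ⊗ θ†) z` at `(a, b)` are the sums of `z_{vw}` over the fibres
`f v = a`, `f w = b`. If `f` is a homomorphism, a non-edge `(a, b)` has only non-edges in its
fibre, which gives the inclusion; conversely, for an edge `(v, w)` the tensor `χ_v ⊗ χ_w` lies in
`Ann(S₂^⊥)` and is mapped to `χ_{f v} ⊗ χ_{f w}`, which lies in `Ann(S₁^⊥)` only if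
`(f v, f w)` is an edge.
-/

open TensorProduct Matrix

/-- The map `Φ` sending `x ⊗ y ∈ ℓ∞(V) ⊗ ℓ∞(V)` to the operator `T ↦ x T y` on
`B(ℓ²(V))`, with `ℓ∞(V)` acting by pointwise (diagonal) multiplication. -/
noncomputable def Phi {V : Type*} [Fintype V] [DecidableEq V] :
    (V → ℂ) ⊗[ℂ] (V → ℂ) →ₗ[ℂ] Matrix V V ℂ →ₗ[ℂ] Matrix V V ℂ :=
  TensorProduct.lift
  { toFun := fun x =>
      { toFun := fun y =>
          (LinearMap.mulLeft ℂ (Matrix.diagonal x)).comp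
            (LinearMap.mulRight ℂ (Matrix.diagonal y))
        map_add' := fun y₁ y₂ => by
          ext T
          simp [Matrix.diagonal_add, Matrix.mul_add]
          ring
        map_smul' := fun c y => by
          ext T
          simp [Matrix.diagonal_smul, Matrix.mul_smul] }
    map_add' := fun x₁ x₂ => by
      ext y T
      simp [Matrix.diagonal_add, Matrix.add_mul]
      ring
    map_smul' := fun c x => by
      ext y T
      simp [Matrix.diagonal_smul, smul_mul_assoc] }

/-- The quantization `S = span{|v⟩⟨w| : (v,w) ∈ E}` of an edge set `E`. -/
noncomputable def quantization {V : Type*} [Fintype V] [DecidableEq V] (E : Set (V × V)) :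
    Submodule ℂ (Matrix V V ℂ) :=
  Submodule.span ℂ {M : Matrix V V ℂ | ∃ p ∈ E, M = Matrix.single p.1 p.2 1}

/-- The annihilator of a subspace `S ⊆ B(ℓ²(V))` inside `ℓ∞(V) ⊗ ℓ∞(V)`. -/
def Ann {V : Type*} [Fintype V] [DecidableEq V] (S : Submodule ℂ (Matrix V V ℂ)) :
    Set ((V → ℂ) ⊗[ℂ] (V → ℂ)) :=
  {z | ∀ T ∈ S, Phi z T = 0}

/-- The adjoint `θ† : ℓ∞(V₂) → ℓ∞(V₁)` of the `*`-homomorphism `θ : g ↦ g ∘ f`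
induced by `f : V₂ → V₁`, with respect to the inner products making the indicator
functions `{χ_v}` orthonormal; it is characterized by `θ†(χ_v) = χ_{f(v)}`. -/
noncomputable def thetaDag {V₁ V₂ : Type*} [Fintype V₂] [DecidableEq V₁] [DecidableEq V₂]
    (f : V₂ → V₁) : (V₂ → ℂ) →ₗ[ℂ] (V₁ → ℂ) :=
  (Pi.basisFun ℂ V₂).constr ℂ (fun v => (Pi.single (f v) 1 : V₁ → ℂ))

noncomputable def tensorEntry (R : Type*) [CommSemiring R] {V : Type*} (v w : V) :
    (V → R) ⊗[R] (V → R) →ₗ[R] R :=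
  TensorProduct.lift ((LinearMap.mul R R).compl₁₂ (LinearMap.proj v) (LinearMap.proj w))

@[simp]
lemma tensorEntry_tmul {R : Type*} [CommSemiring R] {V : Type*} (v w : V) (x y : V → R) :
    tensorEntry R v w (x ⊗ₜ y) = x v * y w := by
  simp [tensorEntry]

lemma tensorEntry_single_tmul_single {R : Type*} [CommSemiring R] {V : Type*} [DecidableEq V]
    (v w a b : V) :
    tensorEntry R a b (Pi.single v 1 ⊗ₜ Pi.single w 1) = if a = v ∧ b = w then 1 else 0 := by
  simp only [tensorEntry_tmul, Pi.single_apply, ite_and]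
  split_ifs <;> simp

lemma Phi_single {V : Type*} [Fintype V] [DecidableEq V] (v w : V)
    (z : (V → ℂ) ⊗[ℂ] (V → ℂ)) :
    Phi z (Matrix.single v w 1) = tensorEntry ℂ v w z • Matrix.single v w 1 := by
  induction z using TensorProduct.induction_on with
  | zero => simp
  | tmul x y =>
    change diagonal x * (Matrix.single v w 1 * diagonal y) = _
    ext i j
    simp only [Matrix.diagonal_mul, Matrix.mul_diagonal, Matrix.single_apply, tensorEntry_tmul,
      Matrix.smul_apply, smul_eq_mul]
    split_ifs with h
    · obtain ⟨rfl, rfl⟩ := h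
      ring
    · simp
  | add z₁ z₂ h₁ h₂ => simp only [map_add, LinearMap.add_apply, h₁, h₂, add_smul]

lemma mem_Ann_quantization_iff {V : Type*} [Fintype V] [DecidableEq V] (E : Set (V × V))
    (z : (V → ℂ) ⊗[ℂ] (V → ℂ)) :
    z ∈ Ann (quantization E) ↔ ∀ p ∈ E, tensorEntry ℂ p.1 p.2 z = 0 := by
  constructor
  · intro hz p hp
    have hPhi := hz _ (Submodule.subset_span ⟨p, hp, rfl⟩)
    rw [Phi_single, smul_eq_zero] at hPhi
    refine hPhi.resolve_right fun hsingle => ?_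
    simpa using congrFun (congrFun hsingle p.1) p.2
  · intro hz T hT
    induction hT using Submodule.span_induction with
    | mem M hM =>
      obtain ⟨p, hp, rfl⟩ := hM
      rw [Phi_single, hz p hp, zero_smul]
    | zero => simp
    | add _ _ _ _ h₁ h₂ => simp [h₁, h₂]
    | smul _ _ _ h => simp [h]

lemma single_tmul_single_mem_Ann_iff {V : Type*} [Fintype V] [DecidableEq V] (E : Set (V × V))
    (v w : V) :
    (Pi.single v 1 ⊗ₜ Pi.single w 1 : (V → ℂ) ⊗[ℂ] (V → ℂ)) ∈ Ann (quantization E) ↔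
      (v, w) ∉ E := by
  simp only [mem_Ann_quantization_iff, tensorEntry_single_tmul_single, Prod.forall]
  constructor
  · intro h hvw
    simpa using h v w hvw
  · rintro hvw a b hab
    rw [if_neg]
    rintro ⟨rfl, rfl⟩
    exact hvw hab

lemma thetaDag_apply {V₁ V₂ : Type*} [Fintype V₂] [DecidableEq V₁] [DecidableEq V₂]
    (f : V₂ → V₁) (g : V₂ → ℂ) (v : V₁) :
    thetaDag f g v = ∑ u with f u = v, g u := by
  rw [thetaDag, Module.Basis.constr_apply_fintype, Finset.sum_filter, Finset.sum_apply]
  simp [Pi.single_apply, eq_comm]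

lemma thetaDag_single {V₁ V₂ : Type*} [Fintype V₂] [DecidableEq V₁] [DecidableEq V₂]
    (f : V₂ → V₁) (u : V₂) :
    thetaDag f (Pi.single u 1) = Pi.single (f u) 1 := by
  ext v
  simp [thetaDag_apply, Pi.single_apply, eq_comm]

lemma tensorEntry_map_thetaDag {V₁ V₂ : Type*} [Fintype V₂] [DecidableEq V₁] [DecidableEq V₂]
    (f g : V₂ → V₁) (v w : V₁) (z : (V₂ → ℂ) ⊗[ℂ] (V₂ → ℂ)) :
    tensorEntry ℂ v w (TensorProduct.map (thetaDag f) (thetaDag g) z) =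
      ∑ u with f u = v, ∑ u' with g u' = w, tensorEntry ℂ u u' z := by
  induction z using TensorProduct.induction_on with
  | zero => simp
  | tmul x y => simp [thetaDag_apply, Finset.sum_mul_sum]
  | add z₁ z₂ h₁ h₂ => simp [h₁, h₂, Finset.sum_add_distrib]

/-- `f : V₂ → V₁` is a graph homomorphism from `G₂` to `G₁` iff
`(θ† ⊗ θ†)(Ann(S₂^⊥)) ⊆ Ann(S₁^⊥)`, where `S_k^⊥ = span{|v⟩⟨w| : (v,w) ∉ E_k}`. -/
theorem stmt_2 {V₁ V₂ : Type*} [Fintype V₁] [DecidableEq V₁] [Fintype V₂] [DecidableEq V₂]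
    (E₁ : Set (V₁ × V₁)) (E₂ : Set (V₂ × V₂)) (f : V₂ → V₁) :
    (∀ v w : V₂, (v, w) ∈ E₂ → (f v, f w) ∈ E₁) ↔
      (TensorProduct.map (thetaDag f) (thetaDag f)) ''
          Ann (quantization {p : V₂ × V₂ | p ∉ E₂}) ⊆
        Ann (quantization {p : V₁ × V₁ | p ∉ E₁}) := by
  constructor
  · rintro hf _ ⟨z, hz, rfl⟩
    rw [mem_Ann_quantization_iff] at hz ⊢
    rintro ⟨v, w⟩ hvw
    rw [tensorEntry_map_thetaDag]
    refine Finset.sum_eq_zero fun u hu => Finset.sum_eq_zero fun u' hu' => hz (u, u') ?_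
    obtain ⟨-, rfl⟩ := Finset.mem_filter.mp hu
    obtain ⟨-, rfl⟩ := Finset.mem_filter.mp hu'
    exact fun huu' => hvw (hf u u' huu')
  · intro h v w hvw
    have hz := (single_tmul_single_mem_Ann_iff {p | p ∉ E₂} v w).mpr (not_not.mpr hvw)
    have himage := h ⟨_, hz, rfl⟩
    rw [TensorProduct.map_tmul, thetaDag_single, thetaDag_single,
      single_tmul_single_mem_Ann_iff] at himage
    exact not_not.mp himage
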